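/- arXiv:1609.05169 — 2 statements merged into one kernel-verified Lean document; each statement's English description precedes it below -/
import Mathlib

section
/- For every fixed x ≥ 0, lim_{α→1⁻} [1 − W(-2x, -α/2, 1)] = erf(x). -/
open Filter MeasureTheory

/-- The Wright function `W(z; ρ; β) = Σ_{k≥0} z^k/(k! Γ(ρk+β))`. -/
noncomputable def wright (z ρ β : ℝ) : ℝ :=
  ∑' k : ℕ, z ^ k / (k.factorial * Real.Gamma (ρ * k + β))

/-- The error function `erf(x) = (2/√π) ∫_0^x e^{-ξ²} dξ`. -/
noncomputable def erf (x : ℝ) : ℝ :=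
  2 / Real.sqrt Real.pi * ∫ ξ in (0 : ℝ)..x, Real.exp (-ξ ^ 2)

/-!
The `k`-th term of `W(z; -α/2; 1)` is `z^k / (k! Γ(1 - αk/2))`. The reflection formula gives
`|1/Γ(1 - s)| ≤ Γ(s)/π` for `s > 0`, and convexity of `Γ` on `(0, ∞)` bounds `Γ(αk/2)` by
`Γ(1/4) + Γ(k/2 + 1)` when `α ∈ [1/2, 1]`. The resulting majorant
`|z|^k (Γ(1/4) + Γ(k/2 + 1))/k!` is summable, so dominated convergence lets `α → 1` term by term.
At `α = 1` the even terms vanish except the constant one (they sit at poles of `Γ`), while the odd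
terms are `-2/√π` times the term-wise integrated Taylor series of `e^{-t²}`:
`W(-z; -1/2; 1) = 1 - erf(z/2)`.
-/

open Real

namespace Real

theorem continuous_inv_Gamma : Continuous fun s : ℝ => (Gamma s)⁻¹ := by
  have h : (fun s : ℝ => (Gamma s)⁻¹) = fun s : ℝ => ((Complex.Gamma s)⁻¹).re := by
    funext s
    rw [Complex.Gamma_ofReal, ← Complex.ofReal_inv, Complex.ofReal_re]
  rw [h]
  exact Complex.continuous_re.comp
    (Complex.differentiable_one_div_Gamma.continuous.comp Complex.continuous_ofReal)

theorem inv_Gamma_one_sub {s : ℝ} (hs : Gamma s ≠ 0) :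
    (Gamma (1 - s))⁻¹ = Gamma s * sin (π * s) / π := calc
  (Gamma (1 - s))⁻¹ = Gamma s * (Gamma s * Gamma (1 - s))⁻¹ := by
    rw [mul_inv, ← mul_assoc, mul_inv_cancel₀ hs, one_mul]
  _ = Gamma s * sin (π * s) / π := by rw [Gamma_mul_Gamma_one_sub, inv_div, mul_div_assoc]

theorem abs_inv_Gamma_one_sub_le {s : ℝ} (hs : 0 < s) :
    |(Gamma (1 - s))⁻¹| ≤ Gamma s / π := by
  have hΓ := Gamma_pos_of_pos hs
  rw [inv_Gamma_one_sub hΓ.ne', abs_div, abs_mul, abs_of_pos hΓ, abs_of_pos pi_pos]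
  gcongr
  exact mul_le_of_le_one_right hΓ.le (abs_sin_le_one _)

theorem Gamma_le_max_of_mem_Icc {a b s : ℝ} (ha : 0 < a) (hs : s ∈ Set.Icc a b) :
    Gamma s ≤ max (Gamma a) (Gamma b) :=
  convexOn_Gamma.le_on_segment ha (ha.trans_le (hs.1.trans hs.2))
    (segment_eq_Icc (hs.1.trans hs.2) ▸ hs)

theorem Gamma_nat_add_half_eq_factorial (m : ℕ) :
    Gamma (m + 1 / 2) = (2 * m).factorial * √π / (4 ^ m * m.factorial) := by
  induction m with
  | zero => simp [-one_div, Gamma_one_half_eq]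
  | succ n ih =>
    rw [Nat.cast_succ, add_right_comm, Gamma_add_one (by positivity), ih,
      show 2 * (n + 1) = 2 * n + 1 + 1 by ring, Nat.factorial_succ, Nat.factorial_succ,
      Nat.factorial_succ]
    push_cast
    field_simp
    ring

theorem inv_Gamma_half_sub_nat (m : ℕ) :
    (Gamma (1 / 2 - m))⁻¹ = (-1) ^ m * (2 * m).factorial / (4 ^ m * m.factorial * √π) := by
  have hsin : sin (π * (m + 1 / 2)) = (-1) ^ m := by
    rw [show π * (m + 1 / 2) = π / 2 + m * π by ring, sin_add_nat_mul_pi, sin_pi_div_two,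
      mul_one]
  rw [show (1 / 2 - m : ℝ) = 1 - (m + 1 / 2) by ring,
    inv_Gamma_one_sub (Gamma_pos_of_pos (by positivity)).ne', hsin,
    Gamma_nat_add_half_eq_factorial]
  have hπ : √π * √π = π := mul_self_sqrt pi_pos.le
  field_simp
  linear_combination hπ

end Real

theorem hasSum_integral_exp_neg_sq (x : ℝ) :
    HasSum (fun m : ℕ => (-1) ^ m * x ^ (2 * m + 1) / (m.factorial * (2 * m + 1)))
      (∫ t in (0 : ℝ)..x, exp (-t ^ 2)) := by
  have hexp (t : ℝ) :
      HasSum (fun m : ℕ => (-1) ^ m * t ^ (2 * m) / m.factorial) (exp (-t ^ 2)) := by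
    have hf : (fun m : ℕ => (-1) ^ m * t ^ (2 * m) / m.factorial) =
        fun m => (-t ^ 2) ^ m / m.factorial := by
      funext m; rw [neg_pow (t ^ 2), pow_mul]
    rw [hf, exp_eq_exp_ℝ]
    exact NormedSpace.expSeries_div_hasSum_exp _
  have hbound (m : ℕ) (t : ℝ) (ht : t ∈ Set.uIoc 0 x) :
      ‖(-1) ^ m * t ^ (2 * m) / m.factorial‖ ≤ (x ^ 2) ^ m / m.factorial := by
    have htx : |t| ≤ |x| := by
      rcases Set.mem_uIoc.mp ht with ⟨h0, h1⟩ | ⟨h0, h1⟩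
      · exact abs_le_abs h1 (by linarith)
      · rw [abs_of_nonpos h1, abs_of_neg (h0.trans_le h1)]; linarith
    rw [norm_div, norm_mul, norm_pow, norm_neg, norm_one, one_pow, one_mul, RCLike.norm_natCast,
      norm_pow, Real.norm_eq_abs, pow_mul, ← sq_abs x]
    gcongr
  have hint (m : ℕ) : ∫ t in (0 : ℝ)..x, (-1) ^ m * t ^ (2 * m) / m.factorial =
      (-1) ^ m * x ^ (2 * m + 1) / (m.factorial * (2 * m + 1)) := by
    rw [intervalIntegral.integral_div, intervalIntegral.integral_const_mul, integral_pow]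
    push_cast
    field_simp
    ring
  simpa only [hint] using intervalIntegral.hasSum_integral_of_dominated_convergence
    (μ := volume) (F := fun (m : ℕ) t => (-1) ^ m * t ^ (2 * m) / m.factorial)
    (f := fun t => exp (-t ^ 2))
    (fun m _ => (x ^ 2) ^ m / m.factorial) (fun m => by fun_prop)
    (fun m => ae_of_all _ (hbound m)) (ae_of_all _ fun _ _ => summable_pow_div_factorial _)
    intervalIntegrable_const (ae_of_all _ fun t _ => hexp t)

theorem hasSum_erf (x : ℝ) :
    HasSum (fun m : ℕ => 2 / √π * ((-1) ^ m * x ^ (2 * m + 1) / (m.factorial * (2 * m + 1))))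
      (erf x) :=
  (hasSum_integral_exp_neg_sq x).mul_left _

theorem summable_pow_mul_Gamma_half_add_one_div_factorial {c : ℝ} (hc : 0 ≤ c) :
    Summable fun k : ℕ => c ^ k * Gamma (k / 2 + 1) / k.factorial := by
  apply Summable.even_add_odd
  · refine (summable_pow_div_factorial (c ^ 2)).of_nonneg_of_le (fun m => by positivity)
      fun m => ?_
    have hΓ : Gamma (((2 * m : ℕ) : ℝ) / 2 + 1) = m.factorial := by
      rw [← Gamma_nat_eq_factorial]; push_cast; ring_nf
    have hfac : (m.factorial : ℝ) * m.factorial ≤ (2 * m).factorial := by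
      exact_mod_cast Nat.le_of_dvd (Nat.factorial_pos _)
        (two_mul m ▸ Nat.factorial_mul_factorial_dvd_factorial_add m m)
    rw [hΓ, pow_mul, div_le_div_iff₀ (by positivity) (by positivity), mul_assoc]
    gcongr
  · refine ((summable_pow_div_factorial (c ^ 2 / 4)).mul_left (c * √π / 2)).congr fun m => ?_
    have hΓ : Gamma (((2 * m + 1 : ℕ) : ℝ) / 2 + 1) =
        (m + 1 / 2) * ((2 * m).factorial * √π / (4 ^ m * m.factorial)) := by
      rw [← Gamma_nat_add_half_eq_factorial, ← Gamma_add_one (by positivity)]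
      push_cast; ring_nf
    rw [hΓ, Nat.factorial_succ, div_pow]
    push_cast
    field_simp
    ring

noncomputable def wrightTerm (z ρ β : ℝ) (k : ℕ) : ℝ :=
  z ^ k / (k.factorial * Gamma (ρ * k + β))

theorem continuous_wrightTerm_param (z β : ℝ) (k : ℕ) :
    Continuous fun ρ => wrightTerm z ρ β k := by
  simp only [wrightTerm, div_eq_mul_inv, mul_inv, ← mul_assoc]
  exact continuous_const.mul (continuous_inv_Gamma.comp (by fun_prop))

theorem norm_wrightTerm_le (z : ℝ) {α : ℝ} (hα : α ∈ Set.Icc (1 / 2) 1) (k : ℕ) :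
    ‖wrightTerm z (-(α / 2)) 1 k‖ ≤
      |z| ^ k * (Gamma (1 / 4) + Gamma (k / 2 + 1)) / k.factorial := by
  have hΓ₀ : 0 < Gamma (1 / 4) := Gamma_pos_of_pos (by norm_num)
  rcases k.eq_zero_or_pos with rfl | hk
  · simpa [wrightTerm] using hΓ₀.le
  have hk : (1 : ℝ) ≤ k := by exact_mod_cast hk
  have hs : α * k / 2 ∈ Set.Icc (1 / 4 : ℝ) (k / 2 + 1) := by
    constructor <;> nlinarith [hα.1, hα.2]
  have hinv : |(Gamma (1 - α * k / 2))⁻¹| ≤ Gamma (1 / 4) + Gamma (k / 2 + 1) := calc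
    _ ≤ Gamma (α * k / 2) / π := abs_inv_Gamma_one_sub_le (by linarith [hs.1])
    _ ≤ Gamma (α * k / 2) := div_le_self (Gamma_pos_of_pos (by linarith [hs.1])).le
      (by linarith [pi_gt_three])
    _ ≤ max (Gamma (1 / 4)) (Gamma (k / 2 + 1)) := Gamma_le_max_of_mem_Icc (by norm_num) hs
    _ ≤ _ := max_le_add_of_nonneg hΓ₀.le (Gamma_pos_of_pos (by positivity)).le
  have hterm :
      wrightTerm z (-(α / 2)) 1 k = z ^ k / k.factorial * (Gamma (1 - α * k / 2))⁻¹ := by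
    rw [wrightTerm, show -(α / 2) * k + 1 = 1 - α * k / 2 by ring, ← div_div, div_eq_mul_inv]
  rw [hterm, norm_mul, norm_div, norm_pow, RCLike.norm_natCast, Real.norm_eq_abs,
    Real.norm_eq_abs]
  calc _ ≤ |z| ^ k / k.factorial * (Gamma (1 / 4) + Gamma (k / 2 + 1)) := by gcongr
    _ = _ := by ring

-- `Gamma` takes the junk value `0` at its poles, so these terms are `0`, as `1/Γ` is there.
theorem wrightTerm_neg_half_two_mul (z : ℝ) (m : ℕ) :
    wrightTerm z (-(1 / 2)) 1 (2 * m) = if m = 0 then 1 else 0 := by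
  rcases m with _ | m
  · simp [wrightTerm]
  · rw [wrightTerm, show -(1 / 2) * ((2 * (m + 1) : ℕ) : ℝ) + 1 = -m by push_cast; ring,
      Gamma_neg_nat_eq_zero, mul_zero, div_zero, if_neg m.succ_ne_zero]

theorem wrightTerm_neg_neg_half_two_mul_add_one (z : ℝ) (m : ℕ) :
    wrightTerm (-z) (-(1 / 2)) 1 (2 * m + 1) =
      -(2 / √π * ((-1) ^ m * (z / 2) ^ (2 * m + 1) / (m.factorial * (2 * m + 1)))) := by
  rw [wrightTerm, show -(1 / 2) * ((2 * m + 1 : ℕ) : ℝ) + 1 = 1 / 2 - m by push_cast; ring,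
    div_eq_mul_inv, mul_inv, inv_Gamma_half_sub_nat, Odd.neg_pow ⟨m, rfl⟩, Nat.factorial_succ]
  have h4 : (4 : ℝ) ^ m = 2 ^ (2 * m) := by rw [pow_mul]; norm_num
  rw [h4, div_pow]
  push_cast
  field_simp
  ring

theorem wright_neg_neg_half_one (z : ℝ) : wright (-z) (-(1 / 2)) 1 = 1 - erf (z / 2) := by
  have h : HasSum (wrightTerm (-z) (-(1 / 2)) 1) (1 + -erf (z / 2)) := by
    refine HasSum.even_add_odd ?_ ?_
    · simpa only [wrightTerm_neg_half_two_mul] using hasSum_ite_eq 0 (1 : ℝ)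
    · simpa only [wrightTerm_neg_neg_half_two_mul_add_one] using (hasSum_erf (z / 2)).neg
  exact h.tsum_eq.trans (sub_eq_add_neg _ _).symm

theorem tendsto_wright_neg_half_left (z : ℝ) :
    Tendsto (fun α => wright z (-(α / 2)) 1) (nhdsWithin 1 (Set.Iio 1))
      (nhds (wright z (-(1 / 2)) 1)) := by
  show Tendsto (fun α => ∑' k, wrightTerm z (-(α / 2)) 1 k) _
    (nhds (∑' k, wrightTerm z (-(1 / 2)) 1 k))
  refine tendsto_tsum_of_dominated_convergence (f := fun α k => wrightTerm z (-(α / 2)) 1 k)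
    (((summable_pow_div_factorial |z|).mul_right (Gamma (1 / 4))).add
      (summable_pow_mul_Gamma_half_add_one_div_factorial (abs_nonneg z)))
    (fun k => ((continuous_wrightTerm_param z 1 k).comp (by fun_prop)).continuousWithinAt) ?_
  filter_upwards [Ioo_mem_nhdsLT (show (1 / 2 : ℝ) < 1 by norm_num)] with α hα k
  exact (norm_wrightTerm_le z (Set.Ioo_subset_Icc_self hα) k).trans_eq (by ring)

theorem one_sub_wright_tendsto_erf_general (x : ℝ) :
    Tendsto (fun α : ℝ => 1 - wright (-(2 * x)) (-(α / 2)) 1)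
      (nhdsWithin 1 (Set.Iio 1)) (nhds (erf x)) := by
  have h := tendsto_const_nhds (x := (1 : ℝ)).sub (tendsto_wright_neg_half_left (-(2 * x)))
  rwa [wright_neg_neg_half_one, mul_div_cancel_left₀ x two_ne_zero, sub_sub_cancel] at h

/-- For fixed `x ≥ 0`, `1 - W(-2x, -α/2, 1) → erf(x)` as `α → 1⁻`. -/
theorem one_sub_wright_tendsto_erf (x : ℝ) (hx : 0 ≤ x) :
    Tendsto (fun α : ℝ => 1 - wright (-(2 * x)) (-(α / 2)) 1)
      (nhdsWithin 1 (Set.Iio 1)) (nhds (erf x)) :=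
  one_sub_wright_tendsto_erf_general x
end

section
/- Let 0 < α < 1, ξ > 0, s(t) = 2ξ t^{α/2}, and u(x,t) = 1 − [1 − W(-x/t^{α/2}, -α/2, 1)]/D with D = 1 − W(-2ξ, -α/2, 1). Then ∫_0^{s(t)} z·u(z,t) dz = 2ξ² t^α (1 − 1/D) − t^α W(-2ξ, -α/2, 1+α)/D − 2ξ t^α W(-2ξ, -α/2, 1+α/2)/D + t^α/(D·Γ(1+α)). -/
open MeasureTheory

/-!
For `-1 < ρ < 0` the reflection formula and the log-convexity of `Γ` give
`1 / |Γ(ρk + β)| ≤ C (k!)^(-ρ)`, so the Wright series converges absolutely for every `z` and may be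
differentiated termwise: `∂_z W(z; ρ; β) = W(z; ρ; ρ + β)`. Hence
`x ↦ -x W(-x; ρ; 1 - ρ) - W(-x; ρ; 1 - 2ρ)` is an antiderivative of `x W(-x; ρ; 1)`, and after the
substitution `z = t^(α/2) x` the moment integral follows from the fundamental theorem of calculus.
-/

open Real Filter
open scoped Nat

theorem Real.inv_abs_Gamma_le_Gamma_one_sub {x : ℝ} (hx : x ≤ 0) :
    |Gamma x|⁻¹ ≤ Gamma (1 - x) / π := by
  rcases eq_or_ne (Gamma x) 0 with h | h
  · rw [h, abs_zero, inv_zero]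
    exact div_nonneg (Gamma_pos_of_pos (by linarith)).le pi_pos.le
  have hΓ : 0 < Gamma (1 - x) := Gamma_pos_of_pos (by linarith)
  have hsin : sin (π * x) ≠ 0 := by
    intro hs
    have := Gamma_mul_Gamma_one_sub x
    rw [hs, div_zero] at this
    exact mul_ne_zero h hΓ.ne' this
  have hinv : (Gamma x)⁻¹ = Gamma (1 - x) * sin (π * x) / π := by
    have := Gamma_mul_Gamma_one_sub x
    rw [eq_div_iff hsin] at this
    refine inv_eq_of_mul_eq_one_right ?_
    rw [← mul_div_assoc, ← mul_assoc, this, div_self pi_ne_zero]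
  rw [← abs_inv, hinv, abs_div, abs_mul, abs_of_pos hΓ, abs_of_pos pi_pos]
  gcongr
  exact mul_le_of_le_one_right hΓ.le (abs_sin_le_one _)

theorem summable_pow_div_factorial_rpow {δ : ℝ} (hδ : 0 < δ) (r : ℝ) :
    Summable fun k : ℕ => r ^ k / (k ! : ℝ) ^ δ := by
  refine summable_of_ratio_norm_eventually_le (r := 1 / 2) (by norm_num) ?_
  have hlarge : ∀ᶠ k : ℕ in atTop, 2 * |r| ≤ ((k : ℝ) + 1) ^ δ :=
    ((tendsto_rpow_atTop hδ).comp
      (tendsto_natCast_atTop_atTop.atTop_add tendsto_const_nhds)).eventually_ge_atTop _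
  filter_upwards [hlarge] with k hk
  have hk0 : 0 < ((k : ℝ) + 1) ^ δ := by positivity
  have hfac : ((k + 1)! : ℝ) ^ δ = ((k : ℝ) + 1) ^ δ * (k ! : ℝ) ^ δ := by
    rw [Nat.factorial_succ, Nat.cast_mul, mul_rpow (by positivity) (by positivity), Nat.cast_succ]
  rw [norm_div, norm_div, norm_pow, norm_pow,
    Real.norm_of_nonneg (rpow_nonneg (Nat.cast_nonneg _) _),
    Real.norm_of_nonneg (rpow_nonneg (Nat.cast_nonneg _) _), hfac, pow_succ, Real.norm_eq_abs,
    mul_comm (|r| ^ k), mul_div_mul_comm]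
  refine mul_le_mul_of_nonneg_right ?_ (by positivity)
  rw [div_le_iff₀ hk0]
  linarith

theorem Real.exists_inv_abs_Gamma_sub_mul_le {γ : ℝ} (hγ0 : 0 < γ) (hγ1 : γ < 1) (β : ℝ) :
    ∃ C, ∀ᶠ k : ℕ in atTop, |Gamma (β - γ * k)|⁻¹ ≤ C * (k ! : ℝ) ^ γ := by
  set T := max 2 ((1 - β) / (1 - γ))
  have hT : 1 - β ≤ (1 - γ) * T := by
    rw [← div_le_iff₀' (by linarith)]; exact le_max_right _ _
  have hT0 : 0 < T := lt_of_lt_of_le two_pos (le_max_left _ _)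
  refine ⟨Gamma T ^ (1 - γ) / π, ?_⟩
  have hlarge : ∀ᶠ k : ℕ in atTop, max β (1 + β) ≤ γ * k :=
    (tendsto_natCast_atTop_atTop.const_mul_atTop hγ0).eventually_ge_atTop _
  filter_upwards [hlarge] with k hk
  have hk1 := (le_max_left _ _).trans hk
  have hk2 := (le_max_right _ _).trans hk
  calc |Gamma (β - γ * k)|⁻¹ ≤ Gamma (1 - (β - γ * k)) / π :=
        inv_abs_Gamma_le_Gamma_one_sub (by linarith)
    _ ≤ Gamma (γ * (k + 1) + (1 - γ) * T) / π := by
        gcongr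
        exact Gamma_strictMonoOn_Ici.monotoneOn (by rw [Set.mem_Ici]; linarith)
          (by rw [Set.mem_Ici]; nlinarith) (by linarith)
    _ ≤ Gamma (k + 1) ^ γ * Gamma T ^ (1 - γ) / π := by
        gcongr
        exact Gamma_mul_add_mul_le_rpow_Gamma_mul_rpow_Gamma (by positivity) hT0 hγ0
          (by linarith) (by ring)
    _ = Gamma T ^ (1 - γ) / π * (k ! : ℝ) ^ γ := by
        rw [Gamma_nat_eq_factorial]; ring

theorem summable_norm_wright_term {ρ : ℝ} (hρ : -1 < ρ) (hρ0 : ρ < 0) (z β : ℝ) :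
    Summable fun k : ℕ => ‖z ^ k / (k ! * Gamma (ρ * k + β))‖ := by
  obtain ⟨C, hC⟩ := exists_inv_abs_Gamma_sub_mul_le (neg_pos.2 hρ0) (by linarith) β
  refine Summable.of_norm_bounded_eventually_nat
    ((summable_pow_div_factorial_rpow (by linarith : 0 < 1 + ρ) |z|).mul_left C) ?_
  filter_upwards [hC] with k hk
  have hfac : (0 : ℝ) < k ! := by positivity
  have hsplit : (k ! : ℝ) ^ (1 + ρ) = k ! * (k ! : ℝ) ^ ρ := by
    rw [rpow_add hfac, rpow_one]
  rw [norm_norm, norm_div, norm_mul, norm_pow, Real.norm_natCast, Real.norm_eq_abs,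
    Real.norm_eq_abs, hsplit, ← div_div, div_eq_mul_inv _ |Gamma _|,
    show ρ * (k : ℝ) + β = β - -ρ * k by ring]
  calc |z| ^ k / k ! * |Gamma (β - -ρ * k)|⁻¹ ≤ |z| ^ k / k ! * (C * (k ! : ℝ) ^ (-ρ)) := by
        gcongr
    _ = C * (|z| ^ k / (k ! * (k ! : ℝ) ^ ρ)) := by
        rw [rpow_neg hfac.le]; ring

theorem summable_wright_term {ρ : ℝ} (hρ : -1 < ρ) (hρ0 : ρ < 0) (z β : ℝ) :
    Summable fun k : ℕ => z ^ k / (k ! * Gamma (ρ * k + β)) :=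
  (summable_norm_wright_term hρ hρ0 z β).of_norm

theorem wright_zero (ρ β : ℝ) : wright 0 ρ β = (Gamma β)⁻¹ := by
  rw [wright, tsum_eq_single 0 fun k hk => by simp [zero_pow hk]]
  simp

theorem hasDerivAt_wright {ρ : ℝ} (hρ : -1 < ρ) (hρ0 : ρ < 0) (β z : ℝ) :
    HasDerivAt (fun y => wright y ρ β) (wright z ρ (ρ + β)) z := by
  set c : ℕ → ℝ := fun k => k ! * Gamma (ρ * k + β)
  set g' : ℕ → ℝ → ℝ := fun k y => k * y ^ (k - 1) / c k
  have hshift : ∀ j y, g' (j + 1) y = y ^ j / (j ! * Gamma (ρ * j + (ρ + β))) := by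
    intro j y
    simp only [g', c, Nat.factorial_succ, Nat.add_sub_cancel, Nat.cast_mul, Nat.cast_succ]
    rw [show ρ * ((j : ℝ) + 1) + β = ρ * j + (ρ + β) by ring, mul_assoc, ← div_div,
      mul_div_cancel_left₀ _ (by positivity)]
  set R := |z| + 1
  have hR : 0 < R := by positivity
  have hu : Summable fun k => ‖g' k R‖ := by
    rw [← summable_nat_add_iff 1]
    simpa only [hshift] using summable_norm_wright_term hρ hρ0 R (ρ + β)
  have hbound : ∀ k y, y ∈ Metric.ball 0 R → ‖g' k y‖ ≤ ‖g' k R‖ := by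
    intro k y hy
    rw [mem_ball_zero_iff] at hy
    simp only [g', norm_div, norm_mul, norm_pow, Real.norm_of_nonneg hR.le]
    gcongr
  have key := hasDerivAt_tsum_of_isPreconnected (g := fun k y => y ^ k / c k) (g' := g') hu
    Metric.isOpen_ball (convex_ball 0 R).isPreconnected
    (fun k y _ => (hasDerivAt_pow k y).div_const (c k)) hbound
    (Metric.mem_ball_self hR) (summable_wright_term hρ hρ0 0 β)
    (show z ∈ Metric.ball 0 R by rw [mem_ball_zero_iff, Real.norm_eq_abs]; linarith)
  have hsum : Summable fun j => g' (j + 1) z := by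
    simpa only [hshift] using summable_wright_term hρ hρ0 z (ρ + β)
  rw [tsum_eq_zero_add' (f := fun n => g' n z) hsum] at key
  have hg'0 : g' 0 z = 0 := by simp [g']
  rw [hg'0, zero_add, tsum_congr (hshift · z)] at key
  exact key

theorem continuous_wright {ρ : ℝ} (hρ : -1 < ρ) (hρ0 : ρ < 0) (β : ℝ) :
    Continuous fun z => wright z ρ β :=
  continuous_iff_continuousAt.2 fun z => (hasDerivAt_wright hρ hρ0 β z).continuousAt

theorem hasDerivAt_wright_neg {ρ : ℝ} (hρ : -1 < ρ) (hρ0 : ρ < 0) (β x : ℝ) :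
    HasDerivAt (fun y => wright (-y) ρ β) (-wright (-x) ρ (ρ + β)) x := by
  have h := (hasDerivAt_wright hρ hρ0 β (-x)).comp x (hasDerivAt_neg x)
  rwa [mul_neg_one] at h

theorem integral_mul_wright_neg {ρ : ℝ} (hρ : -1 < ρ) (hρ0 : ρ < 0) (a : ℝ) :
    ∫ x in (0 : ℝ)..a, x * wright (-x) ρ 1
      = (Gamma (1 - 2 * ρ))⁻¹ - wright (-a) ρ (1 - 2 * ρ) - a * wright (-a) ρ (1 - ρ) := by
  have hG : ∀ x, HasDerivAt (fun y => -(y * wright (-y) ρ (1 - ρ)) - wright (-y) ρ (1 - 2 * ρ))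
      (x * wright (-x) ρ 1) x := by
    intro x
    have h₁ := hasDerivAt_wright_neg hρ hρ0 (1 - ρ) x
    have h₂ := hasDerivAt_wright_neg hρ hρ0 (1 - 2 * ρ) x
    rw [show ρ + (1 - ρ) = 1 by ring] at h₁
    rw [show ρ + (1 - 2 * ρ) = 1 - ρ by ring] at h₂
    refine (((hasDerivAt_id' x).fun_mul h₁).fun_neg.fun_sub h₂).congr_deriv ?_
    ring
  have hint : IntervalIntegrable (fun x => x * wright (-x) ρ 1) volume 0 a :=
    (continuous_id.mul ((continuous_wright hρ hρ0 1).comp continuous_neg)).intervalIntegrable _ _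
  rw [intervalIntegral.integral_eq_sub_of_hasDerivAt (fun x _ => hG x) hint]
  simp only [neg_zero, wright_zero]
  ring

theorem integral_mul_wright_neg_div {ρ : ℝ} (hρ : -1 < ρ) (hρ0 : ρ < 0) {τ : ℝ} (hτ : τ ≠ 0)
    (a : ℝ) :
    ∫ z in (0 : ℝ)..τ * a, z * wright (-(z / τ)) ρ 1
      = τ ^ 2 *
        ((Gamma (1 - 2 * ρ))⁻¹ - wright (-a) ρ (1 - 2 * ρ) - a * wright (-a) ρ (1 - ρ)) := by
  have hscale : ∀ z, z * wright (-(z / τ)) ρ 1 = τ * (z / τ * wright (-(z / τ)) ρ 1) := by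
    intro z
    rw [← mul_assoc, mul_div_cancel₀ _ hτ]
  simp_rw [hscale]
  rw [intervalIntegral.integral_const_mul,
    intervalIntegral.integral_comp_div (fun x => x * wright (-x) ρ 1) hτ, zero_div,
    mul_div_cancel_left₀ _ hτ, smul_eq_mul, integral_mul_wright_neg hρ hρ0]
  ring

theorem moment_integral_formula_general
    (α ξ D : ℝ) (hα : 0 < α) (hα1 : α < 1)
    (u : ℝ → ℝ → ℝ)
    (hu : ∀ x t : ℝ, u x t
      = 1 - (1 - wright (-(x / t ^ (α / 2))) (-(α / 2)) 1) / D) :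
    ∀ t > (0 : ℝ),
      (∫ z in (0 : ℝ)..(2 * ξ * t ^ (α / 2)), z * u z t)
        = 2 * ξ ^ 2 * t ^ α * (1 - 1 / D)
          - t ^ α * wright (-(2 * ξ)) (-(α / 2)) (1 + α) / D
          - 2 * ξ * t ^ α * wright (-(2 * ξ)) (-(α / 2)) (1 + α / 2) / D
          + t ^ α / (D * Real.Gamma (1 + α)) := by
  intro t ht
  have hρ : -1 < -(α / 2) := by linarith
  have hρ0 : -(α / 2) < 0 := by linarith
  set τ := t ^ (α / 2)
  have hτ : τ ≠ 0 := (rpow_pos_of_pos ht _).ne'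
  have hτ2 : τ ^ 2 = t ^ α := by
    rw [← rpow_natCast, ← rpow_mul ht.le]
    norm_num
  have hzu : ∀ z,
      z * u z t = (1 - 1 / D) * z + D⁻¹ * (z * wright (-(z / τ)) (-(α / 2)) 1) := by
    intro z
    rw [hu]
    ring
  have hint : IntervalIntegrable (fun z => z * wright (-(z / τ)) (-(α / 2)) 1)
      volume 0 (τ * (2 * ξ)) := by
    have hW := continuous_wright hρ hρ0 1
    exact (by fun_prop : Continuous _).intervalIntegrable _ _
  rw [intervalIntegral.integral_congr (fun z _ => hzu z), show 2 * ξ * τ = τ * (2 * ξ) by ring,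
    intervalIntegral.integral_add (intervalIntegral.intervalIntegrable_id.const_mul _)
      (hint.const_mul _),
    intervalIntegral.integral_const_mul, intervalIntegral.integral_const_mul, integral_id,
    integral_mul_wright_neg_div hρ hρ0 hτ, show (1 : ℝ) - 2 * -(α / 2) = 1 + α by ring,
    show (1 : ℝ) - -(α / 2) = 1 + α / 2 by ring, ← hτ2]
  ring

/-- The moment integral `∫_0^{s(t)} z u(z,t) dz` for the similarity solution,
with `s(t) = 2ξ t^{α/2}`, `D = 1 - W(-2ξ,-α/2,1)`. -/
theorem moment_integral_formula
    (α ξ D : ℝ) (hα : 0 < α) (hα1 : α < 1) (hξ : 0 < ξ)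
    (hD : D = 1 - wright (-(2 * ξ)) (-(α / 2)) 1)
    (u : ℝ → ℝ → ℝ)
    (hu : ∀ x t : ℝ, u x t
      = 1 - (1 - wright (-(x / t ^ (α / 2))) (-(α / 2)) 1) / D) :
    ∀ t > (0 : ℝ),
      (∫ z in (0 : ℝ)..(2 * ξ * t ^ (α / 2)), z * u z t)
        = 2 * ξ ^ 2 * t ^ α * (1 - 1 / D)
          - t ^ α * wright (-(2 * ξ)) (-(α / 2)) (1 + α) / D
          - 2 * ξ * t ^ α * wright (-(2 * ξ)) (-(α / 2)) (1 + α / 2) / D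
          + t ^ α / (D * Real.Gamma (1 + α)) :=
  moment_integral_formula_general α ξ D hα hα1 u hu
end
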